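/- Define S_{0,h,q}[n,k] by the recurrence S_{0,h,q}[n,k] = q^{k−1}·S_{0,h,q}[n−1,k−1] + h·[k]_q·S_{0,h,q}[n−1,k] with S_{0,h,q}[n,0]=S_{0,h,q}[0,n]=δ_{0,n}. Then the explicit formula holds: S_{0,h,q}[n,k] = (h^{n−k}/[k]_q!) · ∑_{j=0}^{k} (−1)^{k−j}·q^{C(k−j,2)}·[k choose j]_q·[j]_q^n, where C(m,2)=m(m−1)/2, [k]_q! is the q-factorial, and [k choose j]_q the Gaussian binomial coefficient. -/

import Mathlib

open Finset

/-- The q-integer `[k]_q = 1 + q + ... + q^(k-1)`. -/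
def qint {K : Type*} [CommRing K] (q : K) (k : ℕ) : K := ∑ i ∈ Finset.range k, q ^ i

/-- The q-factorial `[k]_q!`. -/
def qfact {K : Type*} [CommRing K] (q : K) (k : ℕ) : K := ∏ i ∈ Finset.range k, qint q (i + 1)

/-- The Gaussian binomial coefficient. -/
def gauss {K : Type*} [CommRing K] (q : K) : ℕ → ℕ → K
  | 0, 0 => 1
  | 0, _ + 1 => 0
  | _ + 1, 0 => 1
  | n + 1, k + 1 => gauss q n k + q ^ (k + 1) * gauss q n (k + 1)

/-- The numbers `S_{0,h,q}[n,k]`, satisfying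
`S[n,k] = q^(k-1) S[n-1,k-1] + h [k]_q S[n-1,k]` with `S[n,0]=S[0,n]=δ_{0,n}`. -/
def S0 {K : Type*} [CommRing K] (h q : K) : ℕ → ℕ → K
  | 0, 0 => 1
  | 0, _ + 1 => 0
  | _ + 1, 0 => 0
  | n + 1, k + 1 => q ^ k * S0 h q n k + h * qint q (k + 1) * S0 h q n (k + 1)

/-!
Write `A(n,k) = ∑ⱼ (-1)^(k-j) q^C(k-j,2) [k choose j]_q [j]_q^n` as `Δ_q^k f (0)` for
`f j = [j]_q^n`. The q-Pascal rule gives `Δ_q^(k+1) f (0) = Δ_q^k f(· + 1) (0) - q^k Δ_q^k f (0)`, and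
the absorption identity `[i+1]_q [k+1 choose i+1]_q = [k+1]_q [k choose i]_q` turns this into
`A(n+1,k+1) = [k+1]_q (A(n,k+1) + q^k A(n,k))`, which is the recurrence satisfied by
`[k]_q! S_{0,1,q}[n,k]`. Finally `S_{0,h,q}[n,k] = h^(n-k) S_{0,1,q}[n,k]`, since every path through
the recurrence from `(n,k)` down to `(0,0)` takes exactly `n - k` steps weighted by `h`.
-/

section

variable {K : Type*} [CommRing K]

lemma qint_zero (q : K) : qint q 0 = 0 := by simp [qint]

lemma qint_succ (q : K) (k : ℕ) : qint q (k + 1) = 1 + q * qint q k := by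
  rw [qint, sum_range_succ', qint, mul_sum]
  simp only [pow_succ', pow_zero, add_comm]

lemma qfact_succ (q : K) (k : ℕ) : qfact q (k + 1) = qfact q k * qint q (k + 1) :=
  prod_range_succ _ _

lemma gauss_zero_right (q : K) (k : ℕ) : gauss q k 0 = 1 := by cases k <;> rfl

lemma gauss_eq_zero_of_lt (q : K) : ∀ {n k : ℕ}, n < k → gauss q n k = 0
  | 0, _ + 1, _ => rfl
  | n + 1, k + 1, hlt => by
    rw [gauss, gauss_eq_zero_of_lt q (by omega), gauss_eq_zero_of_lt q (by omega), mul_zero,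
      add_zero]

lemma qint_mul_gauss_succ_succ (q : K) : ∀ k i : ℕ,
    qint q (i + 1) * gauss q (k + 1) (i + 1) = qint q (k + 1) * gauss q k i
  | 0, i => by cases i <;> simp [gauss]
  | k + 1, 0 => by
    have ih := qint_mul_gauss_succ_succ q k 0
    simp only [qint_succ q 0, qint_zero, gauss_zero_right] at ih ⊢
    rw [gauss, gauss_zero_right, qint_succ q (k + 1)]
    linear_combination q * ih
  | k + 1, i + 1 => by
    have ih₁ := qint_mul_gauss_succ_succ q k i
    have ih₂ := qint_mul_gauss_succ_succ q k (i + 1)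
    have pascal : gauss q (k + 1) (i + 1) = gauss q k i + q ^ (i + 1) * gauss q k (i + 1) := rfl
    rw [gauss, qint_succ q (i + 1), qint_succ q (k + 1)]
    rw [qint_succ q (i + 1)] at ih₂
    linear_combination q * ih₁ + q ^ (i + 2) * ih₂ - q * qint q (k + 1) * pascal

/-- The `k`-th `q`-difference of `f` at `0`. -/
def qDiff (q : K) (k : ℕ) (f : ℕ → K) : K :=
  ∑ j ∈ range (k + 1), (-1) ^ (k - j) * q ^ (k - j).choose 2 * gauss q k j * f j

lemma qDiff_zero (q : K) (f : ℕ → K) : qDiff q 0 f = f 0 := by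
  simp [qDiff, gauss_zero_right]

lemma qDiff_succ (q : K) (k : ℕ) (f : ℕ → K) :
    qDiff q (k + 1) f = qDiff q k (fun j => f (j + 1)) - q ^ k * qDiff q k f := by
  have pascal : qDiff q (k + 1) f = qDiff q k (fun j => f (j + 1)) +
      ∑ j ∈ range (k + 2), (-1) ^ (k + 1 - j) * q ^ ((k + 1 - j).choose 2 + j) * gauss q k j * f j := by
    rw [qDiff, qDiff, sum_range_succ', sum_range_succ' _ (k + 1), ← add_assoc, ← sum_add_distrib]
    congr 1
    · refine sum_congr rfl fun i _ => ?_
      rw [gauss, Nat.succ_sub_succ, pow_add]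
      ring
    · simp only [gauss_zero_right, add_zero]
  have shift : ∑ j ∈ range (k + 2), (-1) ^ (k + 1 - j) * q ^ ((k + 1 - j).choose 2 + j) *
      gauss q k j * f j = -(q ^ k * qDiff q k f) := by
    rw [sum_range_succ, gauss_eq_zero_of_lt q k.lt_succ_self, mul_zero, zero_mul, add_zero, qDiff,
      mul_sum, ← sum_neg_distrib]
    refine sum_congr rfl fun j hj => ?_
    have hjk : j ≤ k := Nat.lt_succ_iff.mp (mem_range.mp hj)
    have hexp : (k - j + 1).choose 2 + j = (k - j).choose 2 + k := by
      rw [Nat.choose_two_right, Nat.triangle_succ, ← Nat.choose_two_right]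
      omega
    rw [Nat.sub_add_comm hjk, hexp, pow_add, pow_succ]
    ring
  rw [pascal, shift, sub_eq_add_neg]

lemma qDiff_succ_const (q c : K) : ∀ k : ℕ, qDiff q (k + 1) (fun _ => c) = 0
  | 0 => by rw [qDiff_succ, qDiff_zero, pow_zero, one_mul, sub_self]
  | k + 1 => by rw [qDiff_succ, qDiff_succ_const q c k, mul_zero, sub_zero]

lemma qDiff_succ_qint_pow_succ (q : K) (n k : ℕ) :
    qDiff q (k + 1) (fun j => qint q j ^ (n + 1)) =
      qint q (k + 1) * (qDiff q (k + 1) (fun j => qint q j ^ n) +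
        q ^ k * qDiff q k (fun j => qint q j ^ n)) := by
  have absorb : qDiff q (k + 1) (fun j => qint q j ^ (n + 1)) =
      qint q (k + 1) * qDiff q k (fun j => qint q (j + 1) ^ n) := by
    rw [qDiff, sum_range_succ', qint_zero, zero_pow n.succ_ne_zero, mul_zero, add_zero, qDiff,
      mul_sum]
    refine sum_congr rfl fun i _ => ?_
    rw [Nat.succ_sub_succ]
    linear_combination (-1) ^ (k - i) * q ^ (k - i).choose 2 * qint q (i + 1) ^ n *
      qint_mul_gauss_succ_succ q k i
  rw [absorb, qDiff_succ q k (fun j => qint q j ^ n)]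
  ring

lemma S0_eq_zero_of_lt (h q : K) : ∀ {n k : ℕ}, n < k → S0 h q n k = 0
  | 0, _ + 1, _ => rfl
  | n + 1, k + 1, hlt => by
    rw [S0, S0_eq_zero_of_lt h q (by omega), S0_eq_zero_of_lt h q (by omega), mul_zero, mul_zero,
      add_zero]

lemma S0_eq_pow_mul_S0_one (h q : K) : ∀ n k : ℕ, S0 h q n k = h ^ (n - k) * S0 1 q n k
  | 0, 0 | 0, _ + 1 | _ + 1, 0 => by simp [S0]
  | n + 1, k + 1 => by
    have hscale : h * h ^ (n - (k + 1)) * S0 1 q n (k + 1) = h ^ (n - k) * S0 1 q n (k + 1) := by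
      rcases lt_or_ge n (k + 1) with hn | hn
      · rw [S0_eq_zero_of_lt 1 q hn, mul_zero, mul_zero]
      · rw [← pow_succ', show n - (k + 1) + 1 = n - k by omega]
    rw [S0, S0, S0_eq_pow_mul_S0_one h q n k, S0_eq_pow_mul_S0_one h q n (k + 1),
      Nat.succ_sub_succ]
    linear_combination qint q (k + 1) * hscale

lemma qfact_mul_S0_one (q : K) : ∀ n k : ℕ,
    qfact q k * S0 1 q n k = qDiff q k (fun j => qint q j ^ n)
  | 0, 0 => by simp [qfact, S0, qDiff_zero]
  | 0, k + 1 => by simp only [pow_zero, qDiff_succ_const, S0, mul_zero]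
  | n + 1, 0 => by simp [S0, qDiff_zero, qint_zero]
  | n + 1, k + 1 => by
    rw [S0, qfact_succ, qDiff_succ_qint_pow_succ, ← qfact_mul_S0_one q n k,
      ← qfact_mul_S0_one q n (k + 1), qfact_succ]
    ring

end

theorem stmt_17 {K : Type*} [Field K] (h q : K) (n k : ℕ) (hfact : qfact q k ≠ 0) :
    S0 h q n k =
      h ^ (n - k) / qfact q k *
        ∑ j ∈ Finset.range (k + 1),
          (-1 : K) ^ (k - j) * q ^ (Nat.choose (k - j) 2) * gauss q k j * (qint q j) ^ n := by
  rw [S0_eq_pow_mul_S0_one, eq_div_of_mul_eq hfact ((mul_comm _ _).trans (qfact_mul_S0_one q n k)),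
    mul_div_assoc', div_mul_eq_mul_div]
  rfl
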